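/- Let T be a finite simple tree. Then 0 is a root of the Laplacian matching polynomial 𝓛𝓜(T, x) of multiplicity exactly 1. -/

import Mathlib

namespace LM

open Finset

variable {V : Type*}

/-- The set of matchings of `G`, as finsets of edges that pairwise share no vertex. -/
def matchings [Fintype V] [DecidableEq V] (G : SimpleGraph V) [DecidableRel G.Adj] :
    Finset (Finset (Sym2 V)) :=
  G.edgeFinset.powerset.filter
    (fun M => ∀ e ∈ M, ∀ f ∈ M, e ≠ f → ∀ w : V, w ∈ e → w ∉ f)

/-- The set of vertices covered by a set of edges. -/
def covered [Fintype V] [DecidableEq V] (M : Finset (Sym2 V)) : Finset V :=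
  Finset.univ.filter (fun v => ∃ e ∈ M, v ∈ e)

/-- The multivariate matching polynomial `𝔐(G, x_G)`. -/
noncomputable def mvMatch [Fintype V] [DecidableEq V] (G : SimpleGraph V)
    [DecidableRel G.Adj] : MvPolynomial V ℝ :=
  ∑ M ∈ matchings G, (-1 : MvPolynomial V ℝ) ^ M.card *
    ∏ v ∈ Finset.univ \ covered M, MvPolynomial.X v

/-- The matching polynomial `𝓜(G, x)`. -/
noncomputable def matchPoly [Fintype V] [DecidableEq V] (G : SimpleGraph V)
    [DecidableRel G.Adj] : Polynomial ℝ :=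
  ∑ M ∈ matchings G, (-1 : Polynomial ℝ) ^ M.card *
    Polynomial.X ^ (Fintype.card V - 2 * M.card)

/-- The Laplacian matching polynomial `𝓛𝓜(G, x)`. -/
noncomputable def lapMatch [Fintype V] [DecidableEq V] (G : SimpleGraph V)
    [DecidableRel G.Adj] : Polynomial ℝ :=
  ∑ M ∈ matchings G, (-1 : Polynomial ℝ) ^ M.card *
    ∏ v ∈ Finset.univ \ covered M, (Polynomial.X - Polynomial.C (G.degree v : ℝ))

/-- The largest real root of a polynomial (`sSup` of its set of real roots). -/
noncomputable def lroot (p : Polynomial ℝ) : ℝ := sSup {x : ℝ | p.IsRoot x}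

instance instDecidableRelInduceAdj (G : SimpleGraph V) [DecidableRel G.Adj] (s : Set V) :
    DecidableRel (G.induce s).Adj := fun a b =>
  inferInstanceAs (Decidable (G.Adj a b))

/-!
At `x = 0` every uncovered vertex contributes `-d(v)`, so up to the sign `(-1)^n`,
`𝓛𝓜(G, 0)` is `∑_M (-1)^|M| ∏_{v ∉ V(M)} d(v)`. Read `∏ d(v)` as the number of ways for the
uncovered vertices to choose an incident edge, and let each edge of `M` be chosen by both of its
endpoints: the pairs `(M, choice)` become the pairs `(φ, M)` with `φ` choosing an incident edge at
every vertex and `M` a subset of the edges `D(φ)` chosen by both endpoints. Summing `(-1)^|M|`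
over these subsets kills every `φ` with `D(φ) ≠ ∅`, leaving the number of injective `φ`. A tree has
fewer edges than vertices, so `𝓛𝓜(T, 0) = 0`. The derivative of `𝓛𝓜` is the sum over `u` of the
same expression with `u` left out, whose value at `0` counts, up to the sign `(-1)^(n-1)`, the
injective choices on `V ∖ {u}`; in a connected graph pointing every vertex towards `u` is one, so
the coefficient of `x` does not vanish.
-/

open Polynomial SimpleGraph

lemma rootMultiplicity_zero_eq_one {R : Type*} [CommRing R] {p : R[X]} (h0 : p.coeff 0 = 0)
    (h1 : p.coeff 1 ≠ 0) : p.rootMultiplicity 0 = 1 := by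
  have hp : p ≠ 0 := fun hp => h1 (by rw [hp, coeff_zero])
  rw [rootMultiplicity_eq_natTrailingDegree']
  refine le_antisymm (natTrailingDegree_le_of_ne_zero h1) (le_natTrailingDegree hp fun m hm => ?_)
  rwa [Nat.lt_one_iff.1 hm]

lemma _root_.SimpleGraph.Connected.exists_adj_dist_lt {G : SimpleGraph V} (hG : G.Connected)
    {u v : V} (hvu : v ≠ u) :
    ∃ w, G.Adj v w ∧ G.dist w u < G.dist v u := by
  obtain ⟨p, hp⟩ := (hG.preconnected v u).exists_walk_length_eq_dist
  cases p with
  | nil => exact absurd rfl hvu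
  | cons hadj q =>
    refine ⟨_, hadj, lt_of_le_of_lt (dist_le q) ?_⟩
    rw [← hp, Walk.length_cons]
    exact Nat.lt_succ_self _

section LapMatch

variable [Fintype V] [DecidableEq V] {G : SimpleGraph V} [DecidableRel G.Adj]

lemma mem_matchings {M : Finset (Sym2 V)} :
    M ∈ matchings G ↔ M ⊆ G.edgeFinset ∧
      ∀ e ∈ M, ∀ f ∈ M, e ≠ f → ∀ w : V, w ∈ e → w ∉ f := by
  simp [matchings]

lemma mem_covered {M : Finset (Sym2 V)} {v : V} : v ∈ covered M ↔ ∃ e ∈ M, v ∈ e := by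
  simp [covered]

lemma covered_eq_biUnion (M : Finset (Sym2 V)) : covered M = M.biUnion Sym2.toFinset := by
  ext v
  simp [mem_covered, Sym2.mem_toFinset]

lemma card_covered {M : Finset (Sym2 V)} (hM : M ∈ matchings G) : #(covered M) = 2 * #M := by
  obtain ⟨hMG, hdisj⟩ := mem_matchings.1 hM
  rw [covered_eq_biUnion, card_biUnion, sum_const_nat, mul_comm]
  · exact fun e he => Sym2.card_toFinset_of_not_isDiag e
      (G.not_isDiag_of_mem_edgeSet (mem_edgeFinset.1 (hMG he)))
  · intro e he f hf hef
    rw [Function.onFun, Finset.disjoint_left]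
    exact fun w hwe hwf =>
      hdisj e he f hf hef w (Sym2.mem_toFinset.1 hwe) (Sym2.mem_toFinset.1 hwf)

variable (G) in
/-- At `v ∈ U` the value is pinned to the loop `s(v, v)`, which is never an edge. -/
def incidentChoices (U : Finset V) : Finset (V → Sym2 V) :=
  Fintype.piFinset fun v => if v ∈ U then {s(v, v)} else G.incidenceFinset v

variable (G) in
def doubledEdges (φ : V → Sym2 V) : Finset (Sym2 V) :=
  G.edgeFinset.filter fun e => ∀ v ∈ e, φ v = e

lemma mem_incidentChoices {U : Finset V} {φ : V → Sym2 V} :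
    φ ∈ incidentChoices G U ↔ ∀ v, φ v ∈ (if v ∈ U then {s(v, v)} else G.incidenceFinset v) :=
  Fintype.mem_piFinset

lemma mem_doubledEdges {φ : V → Sym2 V} {e : Sym2 V} :
    e ∈ doubledEdges G φ ↔ e ∈ G.edgeFinset ∧ ∀ v ∈ e, φ v = e :=
  mem_filter

/-- Every set of doubled edges is a matching avoiding `U`: a vertex of two doubled edges would
choose both, and a vertex of `U` chooses a loop. -/
lemma filter_subset_doubledEdges_eq_powerset {U : Finset V} {φ : V → Sym2 V}
    (hφ : φ ∈ incidentChoices G U) :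
    (matchings G).filter (fun M => Disjoint (covered M) U ∧ M ⊆ doubledEdges G φ) =
      (doubledEdges G φ).powerset := by
  ext M
  simp only [mem_filter, mem_powerset]
  refine ⟨fun h => h.2.2, fun hM => ?_⟩
  have hdoubled : ∀ e ∈ M, e ∈ G.edgeFinset ∧ ∀ v ∈ e, φ v = e := fun e he =>
    mem_doubledEdges.1 (hM he)
  refine ⟨?_, ?_, hM⟩
  · refine mem_matchings.2 ⟨fun e he => (hdoubled e he).1, ?_⟩
    intro e he f hf hef w hwe hwf
    exact hef (((hdoubled e he).2 w hwe).symm.trans ((hdoubled f hf).2 w hwf))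
  · refine Finset.disjoint_left.2 fun v hv hvU => ?_
    obtain ⟨e, he, hve⟩ := mem_covered.1 hv
    have hφv := mem_incidentChoices.1 hφ v
    rw [if_pos hvU, mem_singleton, (hdoubled e he).2 v hve] at hφv
    exact G.not_isDiag_of_mem_edgeSet (mem_edgeFinset.1 (hdoubled e he).1) (hφv ▸ rfl)

lemma card_incidenceFinset_filter_of_mem_covered {M : Finset (Sym2 V)} (hM : M ∈ matchings G)
    {v : V} (hv : v ∈ covered M) :
    #((G.incidenceFinset v).filter fun e => ∀ f ∈ M, v ∈ f → e = f) = 1 := by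
  obtain ⟨hMG, hdisj⟩ := mem_matchings.1 hM
  obtain ⟨f, hf, hvf⟩ := mem_covered.1 hv
  rw [card_eq_one]
  refine ⟨f, eq_singleton_iff_unique_mem.2 ⟨mem_filter.2 ⟨?_, ?_⟩, ?_⟩⟩
  · exact (mem_incidenceFinset _ _ _).2 ⟨mem_edgeFinset.1 (hMG hf), hvf⟩
  · intro f' hf' hvf'
    by_contra hne
    exact hdisj f hf f' hf' hne v hvf hvf'
  · exact fun e he => (mem_filter.1 he).2 f hf hvf

lemma card_filter_subset_doubledEdges {U : Finset V} {M : Finset (Sym2 V)}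
    (hM : M ∈ matchings G) (hMU : Disjoint (covered M) U) :
    #((incidentChoices G U).filter fun φ => M ⊆ doubledEdges G φ) =
      ∏ v ∈ univ \ (covered M ∪ U), G.degree v := by
  have hpi : (incidentChoices G U).filter (fun φ => M ⊆ doubledEdges G φ) =
      Fintype.piFinset fun v => (if v ∈ U then {s(v, v)} else G.incidenceFinset v).filter
        fun e => ∀ f ∈ M, v ∈ f → e = f := by
    ext φ
    simp only [mem_filter, mem_incidentChoices, Fintype.mem_piFinset, subset_iff,
      mem_doubledEdges]
    have hMG := (mem_matchings.1 hM).1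
    exact ⟨fun h v => ⟨h.1 v, fun f hf hvf => (h.2 hf).2 v hvf⟩,
      fun h => ⟨fun v => (h v).1, fun f hf => ⟨hMG hf, fun v hvf => (h v).2 f hf hvf⟩⟩⟩
  rw [hpi, Fintype.card_piFinset, ← Fintype.prod_ite_mem (univ \ (covered M ∪ U))]
  refine prod_congr rfl fun v _ => ?_
  by_cases hvU : v ∈ U
  · have hv : v ∉ covered M := disjoint_right.1 hMU hvU
    rw [if_pos hvU, if_neg (by simp [hvU]), filter_true_of_mem, card_singleton]
    exact fun _ _ f hf hvf => absurd (mem_covered.2 ⟨f, hf, hvf⟩) hv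
  by_cases hv : v ∈ covered M
  · rw [if_neg hvU, if_neg (by simp [hv]), card_incidenceFinset_filter_of_mem_covered hM hv]
  · rw [if_neg hvU, if_pos (by simp [hv, hvU]), filter_true_of_mem,
      card_incidenceFinset_eq_degree]
    exact fun _ _ f hf hvf => absurd (mem_covered.2 ⟨f, hf, hvf⟩) hv

theorem sum_matchings_eq_card_doubledEdges_eq_empty (U : Finset V) :
    ∑ M ∈ (matchings G).filter (fun M => Disjoint (covered M) U),
        (-1 : ℤ) ^ #M * ∏ v ∈ univ \ (covered M ∪ U), (G.degree v : ℤ) =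
      #((incidentChoices G U).filter fun φ => doubledEdges G φ = ∅) := by
  calc _ = ∑ M ∈ (matchings G).filter (fun M => Disjoint (covered M) U),
        ∑ _φ ∈ (incidentChoices G U).filter (fun φ => M ⊆ doubledEdges G φ), (-1 : ℤ) ^ #M := by
        refine sum_congr rfl fun M hM => ?_
        obtain ⟨hM, hMU⟩ := mem_filter.1 hM
        rw [sum_const, card_filter_subset_doubledEdges hM hMU, nsmul_eq_mul, mul_comm]
        push_cast
        rfl
    _ = ∑ φ ∈ incidentChoices G U, ∑ M ∈ (matchings G).filter
          (fun M => Disjoint (covered M) U ∧ M ⊆ doubledEdges G φ), (-1 : ℤ) ^ #M := by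
        refine sum_comm' fun M φ => ?_
        simp only [mem_filter]
        tauto
    _ = ∑ φ ∈ incidentChoices G U, if doubledEdges G φ = ∅ then 1 else 0 := by
        refine sum_congr rfl fun φ hφ => ?_
        rw [filter_subset_doubledEdges_eq_powerset hφ, sum_powerset_neg_one_pow_card]
    _ = _ := by rw [sum_boole]

variable (G) in
/-- `𝓛𝓜(G)` without the factors of the vertices of `U`, summed over the matchings avoiding `U`;
the degrees are still those of `G`, so this is not `𝓛𝓜` of `G - U`. -/
noncomputable def lapMatchAvoiding (U : Finset V) : ℝ[X] :=
  ∑ M ∈ (matchings G).filter (fun M => Disjoint (covered M) U),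
    (-1 : ℝ[X]) ^ #M * ∏ v ∈ univ \ (covered M ∪ U), (X - C (G.degree v : ℝ))

lemma lapMatchAvoiding_empty : lapMatchAvoiding G ∅ = lapMatch G := by
  simp [lapMatchAvoiding, lapMatch]

lemma derivative_lapMatch : derivative (lapMatch G) = ∑ u, lapMatchAvoiding G {u} := by
  have hfactor (M : Finset (Sym2 V)) : derivative ((-1 : ℝ[X]) ^ #M *
      ∏ v ∈ univ \ covered M, (X - C (G.degree v : ℝ))) = ∑ u ∈ univ \ covered M,
        (-1 : ℝ[X]) ^ #M * ∏ v ∈ univ \ (covered M ∪ {u}), (X - C (G.degree v : ℝ)) := by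
    have hconst : derivative ((-1 : ℝ[X]) ^ #M) = 0 := by
      rw [← C_1, ← C_neg, ← C_pow, derivative_C]
    rw [derivative_mul, hconst, zero_mul, zero_add, derivative_prod_finset, mul_sum]
    refine sum_congr rfl fun u _ => ?_
    rw [derivative_sub, derivative_X, derivative_C, sub_zero, mul_one, ← sdiff_singleton_eq_erase,
      Finset.sdiff_sdiff_left', sdiff_union_distrib]
  simp only [lapMatch, lapMatchAvoiding, derivative_sum, hfactor]
  refine sum_comm' fun M u => ?_
  simp [disjoint_singleton_right]

lemma eval_zero_lapMatchAvoiding (U : Finset V) :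
    (lapMatchAvoiding G U).eval 0 =
      (-1) ^ #(univ \ U) * #((incidentChoices G U).filter fun φ => doubledEdges G φ = ∅) := by
  have hcount := congrArg (Int.cast : ℤ → ℝ)
    (sum_matchings_eq_card_doubledEdges_eq_empty (G := G) U)
  push_cast at hcount
  rw [← hcount, lapMatchAvoiding, eval_finsetSum, mul_sum]
  refine sum_congr rfl fun M hM => ?_
  obtain ⟨hM, hMU⟩ := mem_filter.1 hM
  have hcard : #(univ \ (covered M ∪ U)) + 2 * #M = #(univ \ U) := by
    rw [sdiff_union_distrib, inter_comm, ← Finset.sdiff_sdiff_left', ← card_covered hM]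
    exact card_sdiff_add_card_eq_card fun v hv => by simp [disjoint_left.1 hMU hv]
  simp only [eval_mul, eval_pow, eval_neg, eval_one, eval_prod, eval_sub, eval_X, eval_C,
    zero_sub, prod_neg, ← hcard, pow_add, pow_mul]
  ring

lemma doubledEdges_nonempty_of_card_edgeFinset_lt (hcard : #G.edgeFinset < Fintype.card V)
    {φ : V → Sym2 V} (hφ : φ ∈ incidentChoices G ∅) : (doubledEdges G φ).Nonempty := by
  have hinc (v : V) : φ v ∈ G.incidenceFinset v := by
    simpa using mem_incidentChoices.1 hφ v
  have hmaps (v : V) (_ : v ∈ univ) : φ v ∈ G.edgeFinset :=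
    mem_edgeFinset.2 ((mem_incidenceFinset _ _ _).1 (hinc v)).1
  obtain ⟨a, -, b, -, hab, hφab⟩ := exists_ne_map_eq_of_card_lt_of_maps_to hcard hmaps
  have ha : a ∈ φ a := ((mem_incidenceFinset _ _ _).1 (hinc a)).2
  have hb : b ∈ φ a := hφab ▸ ((mem_incidenceFinset _ _ _).1 (hinc b)).2
  have hφa : φ a = s(a, b) := (Sym2.mem_and_mem_iff hab).1 ⟨ha, hb⟩
  refine ⟨φ a, mem_doubledEdges.2 ⟨hmaps a (mem_univ a), fun v hv => ?_⟩⟩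
  rcases Sym2.mem_iff.1 (hφa ▸ hv) with rfl | rfl
  exacts [rfl, hφab.symm]

/-- Every vertex other than `u` chooses its edge towards `u` along a shortest path. -/
lemma exists_doubledEdges_eq_empty_of_connected (hG : G.Connected) (u : V) :
    ∃ φ ∈ incidentChoices G {u}, doubledEdges G φ = ∅ := by
  choose! parent hadj hdist using fun v (hvu : v ≠ u) => hG.exists_adj_dist_lt hvu
  refine ⟨fun v => if v = u then s(v, v) else s(v, parent v), ?_, ?_⟩
  · refine mem_incidentChoices.2 fun v => ?_
    by_cases hvu : v = u
    · simp [hvu]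
    · simpa [hvu, mem_incidenceFinset] using hadj v hvu
  · refine eq_empty_of_forall_notMem fun e he => ?_
    obtain ⟨heG, hφe⟩ := mem_doubledEdges.1 he
    induction e using Sym2.ind with
    | _ a b =>
      have hab : G.Adj a b := mem_edgeFinset.1 heG
      have hpoints {x y : V} (hxy : G.Adj x y) (hx : (if x = u then s(x, x) else s(x, parent x)) =
          s(x, y)) : x ≠ u ∧ parent x = y := by
        by_cases hxu : x = u
        · rw [if_pos hxu, Sym2.congr_right] at hx
          exact absurd hx hxy.ne
        · rw [if_neg hxu, Sym2.congr_right] at hx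
          exact ⟨hxu, hx⟩
      obtain ⟨hau, hpa⟩ := hpoints hab (hφe a (Sym2.mem_mk_left a b))
      obtain ⟨hbu, hpb⟩ := hpoints hab.symm ((hφe b (Sym2.mem_mk_right a b)).trans Sym2.eq_swap)
      have hba := hdist a hau
      have hab' := hdist b hbu
      rw [hpa] at hba
      rw [hpb] at hab'
      omega

lemma coeff_zero_lapMatch_of_card_edgeFinset_lt (hcard : #G.edgeFinset < Fintype.card V) :
    (lapMatch G).coeff 0 = 0 := by
  rw [coeff_zero_eq_eval_zero, ← lapMatchAvoiding_empty, eval_zero_lapMatchAvoiding,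
    filter_false_of_mem fun φ hφ =>
      (doubledEdges_nonempty_of_card_edgeFinset_lt hcard hφ).ne_empty, card_empty,
    Nat.cast_zero, mul_zero]

lemma coeff_one_lapMatch_ne_zero_of_connected (hG : G.Connected) : (lapMatch G).coeff 1 ≠ 0 := by
  have hcoeff : (lapMatch G).coeff 1 = (derivative (lapMatch G)).eval 0 := by
    simp [← coeff_zero_eq_eval_zero, coeff_derivative]
  have hpos (u : V) : 0 < #((incidentChoices G {u}).filter fun φ => doubledEdges G φ = ∅) := by
    obtain ⟨φ, hφ, hφ'⟩ := exists_doubledEdges_eq_empty_of_connected hG u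
    exact card_pos.2 ⟨φ, mem_filter.2 ⟨hφ, hφ'⟩⟩
  simp only [hcoeff, derivative_lapMatch, eval_finsetSum, eval_zero_lapMatchAvoiding,
    card_univ_sdiff, card_singleton, ← mul_sum]
  have : Nonempty V := hG.nonempty
  exact mul_ne_zero (pow_ne_zero _ (by norm_num))
    (sum_pos (fun u _ => Nat.cast_pos.2 (hpos u)) univ_nonempty).ne'

end LapMatch

/-- For a finite tree `T`, `0` is a root of the Laplacian matching
polynomial `𝓛𝓜(T, x)` of multiplicity exactly `1`. -/
theorem lapMatch_rootMultiplicity_zero_of_isTree [Fintype V] [DecidableEq V]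
    (T : SimpleGraph V) [DecidableRel T.Adj] (hT : T.IsTree) :
    (lapMatch T).rootMultiplicity 0 = 1 := by
  have hcard : #T.edgeFinset < Fintype.card V := by
    rw [← hT.card_edgeFinset]
    exact Nat.lt_succ_self _
  exact rootMultiplicity_zero_eq_one (coeff_zero_lapMatch_of_card_edgeFinset_lt hcard)
    (coeff_one_lapMatch_ne_zero_of_connected hT.connected)

end LM
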